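/- arXiv:2403.12763 — 2 statements merged into one kernel-verified Lean document; each statement's English description precedes it below -/
import Mathlib

section
/- Let s > 0 and λ ≥ 0 be real numbers with λ + s > 1/2. There exists a constant C = C(λ, s) > 0 such that for every family (Γ_n)_{n∈ℤ} of nonnegative real numbers and all square-summable families (ã_n)_{n∈ℤ}, (b̃_n)_{n∈ℤ} of nonnegative real numbers, Σ_{(n₁,n₂) ∈ ℤ², |n₁| ≠ |n₂|} ( Γ_{n₁ − n₂} / ⟨ |n₁| − |n₂| ⟩^s ) ã_{n₁} b̃_{n₂} ≤ C ( Σ_{n∈ℤ} ⟨n⟩^{2λ} Γ_n² )^{1/2} ( Σ_{n∈ℤ} ã_n² )^{1/2} ( Σ_{n∈ℤ} b̃_n² )^{1/2}. -/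
open Real

noncomputable section

/-- The Japanese bracket `⟨x⟩ = (1 + x²)^{1/2}`. -/
def jb (x : ℝ) : ℝ := (1 + x ^ 2) ^ ((1:ℝ)/2)


open MeasureTheory
open scoped ENNReal


lemma jb_pos (x : ℝ) : 0 < jb x := by unfold jb; positivity

lemma jb_one_le (x : ℝ) : 1 ≤ jb x := by
  unfold jb
  nth_rewrite 1 [show (1:ℝ) = 1 ^ ((1:ℝ)/2) from (Real.one_rpow _).symm]
  exact Real.rpow_le_rpow (by norm_num) (by nlinarith [sq_nonneg x]) (by norm_num)

lemma jb_mono {x y : ℝ} (h : x ^ 2 ≤ y ^ 2) : jb x ≤ jb y := by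
  unfold jb
  exact Real.rpow_le_rpow (by positivity) (by linarith) (by norm_num)

lemma jb_even (x : ℝ) : jb (-x) = jb x := by unfold jb; ring_nf

lemma jb_abs_sub_le (a b : ℝ) : jb (|a| - |b|) ≤ jb (a - b) := by
  apply jb_mono
  rcases abs_cases a with ⟨ha, _⟩ | ⟨ha, _⟩ <;> rcases abs_cases b with ⟨hb, _⟩ | ⟨hb, _⟩ <;>
    rw [ha, hb] <;> nlinarith

lemma jb_rpow_anti {x y r : ℝ} (hx : 0 < x) (hxy : x ≤ y) (hr : r ≤ 0) : y ^ r ≤ x ^ r :=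
  Real.rpow_le_rpow_of_nonpos hx hxy hr

-- key pointwise bound
lemma key_bound (lam s : ℝ) (hlam : 0 ≤ lam) (hs : 0 ≤ s) (a b : ℝ) :
    jb (a - b) ^ (-(2*lam)) * jb (|a| - |b|) ^ (-(2*s)) ≤
      jb (a - b) ^ (-(2*(lam+s))) + jb (a + b) ^ (-(2*(lam+s))) := by
  have h1 : jb (a - b) ^ (-(2*lam)) ≤ jb (|a| - |b|) ^ (-(2*lam)) :=
    jb_rpow_anti (jb_pos _) (jb_abs_sub_le a b) (by linarith)
  have h2 : jb (a - b) ^ (-(2*lam)) * jb (|a| - |b|) ^ (-(2*s)) ≤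
      jb (|a| - |b|) ^ (-(2*(lam+s))) := by
    calc jb (a - b) ^ (-(2*lam)) * jb (|a| - |b|) ^ (-(2*s))
        ≤ jb (|a| - |b|) ^ (-(2*lam)) * jb (|a| - |b|) ^ (-(2*s)) := by
          apply mul_le_mul_of_nonneg_right h1 (Real.rpow_nonneg (jb_pos _).le _)
      _ = jb (|a| - |b|) ^ (-(2*(lam+s))) := by
          rw [← Real.rpow_add (jb_pos _)]; ring_nf
  refine h2.trans ?_
  have hcase : jb (|a| - |b|) = jb (a - b) ∨ jb (|a| - |b|) = jb (a + b) := by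
    rcases abs_cases a with ⟨ha, _⟩ | ⟨ha, _⟩ <;> rcases abs_cases b with ⟨hb, _⟩ | ⟨hb, _⟩ <;>
      rw [ha, hb]
    · left; rfl
    · right; ring_nf
    · right; rw [show -a - b = -(a+b) by ring, jb_even]
    · left; rw [show -a - -b = -(a-b) by ring, jb_even]
  rcases hcase with h | h <;> rw [h]
  · exact le_add_of_nonneg_right (Real.rpow_nonneg (jb_pos _).le _)
  · exact le_add_of_nonneg_left (Real.rpow_nonneg (jb_pos _).le _)


lemma summable_jb_rpow {r : ℝ} (hr : 1 < r) :
    Summable (fun m : ℤ => jb (m : ℝ) ^ (-r)) := by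
  have hind : Summable (fun m : ℤ => if m = 0 then (1:ℝ) else 0) := by
    apply summable_of_ne_finset_zero (s := {0})
    intro b hb
    simp at hb ⊢
    exact hb
  apply Summable.of_nonneg_of_le (fun m => Real.rpow_nonneg (jb_pos _).le _)
    (f := fun m : ℤ => |(m:ℝ)| ^ (-r) + if m = 0 then (1:ℝ) else 0)
    ?_ ((Real.summable_abs_int_rpow hr).add hind)
  intro m
  by_cases hm : m = 0
  · subst hm
    simp [jb]
    exact Real.rpow_nonneg le_rfl _
  · have h0 : (0:ℝ) < |(m:ℝ)| := by
      simp only [abs_pos, Int.cast_ne_zero]; exact hm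
    have h1 : |(m:ℝ)| ≤ jb m := by
      unfold jb
      calc |(m:ℝ)| = ((m:ℝ)^2) ^ ((1:ℝ)/2) := by
            rw [← Real.sqrt_eq_rpow]
            exact (Real.sqrt_sq_eq_abs _).symm
        _ ≤ (1 + (m:ℝ)^2) ^ ((1:ℝ)/2) :=
            Real.rpow_le_rpow (by positivity) (by linarith) (by norm_num)
    simp only [hm, if_false, add_zero]
    exact Real.rpow_le_rpow_of_nonpos h0 h1 (by linarith)

-- Cauchy-Schwarz for ENNReal tsums
lemma tsum_cs {ι : Type*} [Countable ι] [MeasurableSpace ι] [MeasurableSingletonClass ι]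
    (f g : ι → ENNReal) :
    ∑' i, f i * g i ≤ (∑' i, f i ^ (2:ℝ)) ^ ((1:ℝ)/2) * (∑' i, g i ^ (2:ℝ)) ^ ((1:ℝ)/2) := by
  have hpq : Real.HolderConjugate 2 2 := Real.HolderConjugate.two_two
  have hf : AEMeasurable f (Measure.count : Measure ι) :=
    (measurable_of_countable f).aemeasurable
  have hg : AEMeasurable g (Measure.count : Measure ι) :=
    (measurable_of_countable g).aemeasurable
  have := ENNReal.lintegral_mul_le_Lp_mul_Lq (Measure.count : Measure ι) hpq hf hg
  simpa [lintegral_count] using this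


lemma usq (lam : ℝ) (Γ : ℤ → ℝ) (hΓ : ∀ n, 0 ≤ Γ n) (m : ℤ) :
    ENNReal.ofReal (jb (m:ℝ) ^ lam * Γ m) ^ (2:ℝ)
      = ENNReal.ofReal (jb (m:ℝ) ^ (2*lam) * Γ m ^ 2) := by
  rw [ENNReal.ofReal_rpow_of_nonneg (mul_nonneg (Real.rpow_nonneg (jb_pos _).le _) (hΓ m))
    (by norm_num)]
  congr 1
  rw [Real.mul_rpow (Real.rpow_nonneg (jb_pos _).le _) (hΓ m),
    ← Real.rpow_mul (jb_pos _).le, mul_comm lam 2]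
  congr 1
  rw [show (2:ℝ) = ((2:ℕ):ℝ) by norm_num, Real.rpow_natCast]

lemma vsq (lam s : ℝ) (hlam : 0 ≤ lam) (hs : 0 < s) (a b : ℝ) :
    ENNReal.ofReal (jb (a - b) ^ (-lam) * jb (|a| - |b|) ^ (-s)) ^ (2:ℝ)
      ≤ ENNReal.ofReal (jb (a - b) ^ (-(2*(lam+s))))
        + ENNReal.ofReal (jb (a + b) ^ (-(2*(lam+s)))) := by
  have h1 : ENNReal.ofReal (jb (a - b) ^ (-lam) * jb (|a| - |b|) ^ (-s)) ^ (2:ℝ)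
      = ENNReal.ofReal (jb (a - b) ^ (-(2*lam)) * jb (|a| - |b|) ^ (-(2*s))) := by
    rw [ENNReal.ofReal_rpow_of_nonneg
      (mul_nonneg (Real.rpow_nonneg (jb_pos _).le _) (Real.rpow_nonneg (jb_pos _).le _))
      (by norm_num)]
    congr 1
    rw [Real.mul_rpow (Real.rpow_nonneg (jb_pos _).le _) (Real.rpow_nonneg (jb_pos _).le _),
      ← Real.rpow_mul (jb_pos _).le, ← Real.rpow_mul (jb_pos _).le]
    ring_nf
  rw [h1, ← ENNReal.ofReal_add (Real.rpow_nonneg (jb_pos _).le _)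
    (Real.rpow_nonneg (jb_pos _).le _)]
  exact ENNReal.ofReal_le_ofReal (key_bound lam s hlam hs.le a b)

lemma row_bound (lam s : ℝ) (hlam : 0 ≤ lam) (hs : 0 < s)
    (Γ : ℤ → ℝ) (hΓ : ∀ n, 0 ≤ Γ n) (n₁ : ℤ) :
    ∑' n₂ : ℤ, ENNReal.ofReal (Γ (n₁ - n₂) / jb (|(n₁:ℝ)| - |(n₂:ℝ)|) ^ s)
      ≤ (∑' n : ℤ, ENNReal.ofReal (jb (n:ℝ) ^ (2*lam) * Γ n ^ 2)) ^ ((1:ℝ)/2)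
        * (2 * ∑' m : ℤ, ENNReal.ofReal (jb (m:ℝ) ^ (-(2*(lam+s))))) ^ ((1:ℝ)/2) := by
  set u : ℤ → ℝ := fun m => jb (m:ℝ) ^ lam * Γ m with hu_def
  set v : ℤ → ℝ := fun n₂ => jb ((n₁:ℝ) - (n₂:ℝ)) ^ (-lam) * jb (|(n₁:ℝ)| - |(n₂:ℝ)|) ^ (-s)
    with hv_def
  have hu : ∀ m, 0 ≤ u m := fun m => mul_nonneg (Real.rpow_nonneg (jb_pos _).le _) (hΓ m)
  have hker : ∀ n₂ : ℤ, Γ (n₁ - n₂) / jb (|(n₁:ℝ)| - |(n₂:ℝ)|) ^ s = u (n₁ - n₂) * v n₂ := by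
    intro n₂
    simp only [hu_def, hv_def]
    have hcast : ((n₁ - n₂ : ℤ) : ℝ) = (n₁:ℝ) - (n₂:ℝ) := by push_cast; ring
    rw [hcast, Real.rpow_neg (jb_pos _).le, Real.rpow_neg (jb_pos _).le]
    have hP : jb ((n₁:ℝ) - (n₂:ℝ)) ^ lam ≠ 0 := (Real.rpow_pos_of_pos (jb_pos _) _).ne'
    field_simp
  calc ∑' n₂ : ℤ, ENNReal.ofReal (Γ (n₁ - n₂) / jb (|(n₁:ℝ)| - |(n₂:ℝ)|) ^ s)
      = ∑' n₂ : ℤ, ENNReal.ofReal (u (n₁ - n₂)) * ENNReal.ofReal (v n₂) := by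
        congr 1; funext n₂; rw [hker n₂, ENNReal.ofReal_mul (hu _)]
    _ ≤ (∑' n₂ : ℤ, ENNReal.ofReal (u (n₁ - n₂)) ^ (2:ℝ)) ^ ((1:ℝ)/2)
        * (∑' n₂ : ℤ, ENNReal.ofReal (v n₂) ^ (2:ℝ)) ^ ((1:ℝ)/2) := tsum_cs _ _
    _ ≤ _ := by
        have h1 : ∑' n₂ : ℤ, ENNReal.ofReal (u (n₁ - n₂)) ^ (2:ℝ)
            ≤ ∑' n : ℤ, ENNReal.ofReal (jb (n:ℝ) ^ (2*lam) * Γ n ^ 2) := by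
          have eu := (Equiv.subLeft n₁).tsum_eq (fun m : ℤ => ENNReal.ofReal (u m) ^ (2:ℝ))
          simp only [Equiv.subLeft_apply] at eu
          rw [eu]
          exact le_of_eq (tsum_congr fun m => usq lam Γ hΓ m)
        have h2 : ∑' n₂ : ℤ, ENNReal.ofReal (v n₂) ^ (2:ℝ)
            ≤ 2 * ∑' m : ℤ, ENNReal.ofReal (jb (m:ℝ) ^ (-(2*(lam+s)))) := by
          calc ∑' n₂ : ℤ, ENNReal.ofReal (v n₂) ^ (2:ℝ)
              ≤ ∑' n₂ : ℤ, (ENNReal.ofReal (jb (((n₁ - n₂ : ℤ)):ℝ) ^ (-(2*(lam+s))))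
                + ENNReal.ofReal (jb (((n₁ + n₂ : ℤ)):ℝ) ^ (-(2*(lam+s))))) := by
                apply ENNReal.tsum_le_tsum
                intro n₂
                have := vsq lam s hlam hs (n₁:ℝ) (n₂:ℝ)
                simp only [hv_def]
                convert this using 4 <;> push_cast <;> ring
            _ = (∑' n₂ : ℤ, ENNReal.ofReal (jb (((n₁ - n₂ : ℤ)):ℝ) ^ (-(2*(lam+s)))))
                + ∑' n₂ : ℤ, ENNReal.ofReal (jb (((n₁ + n₂ : ℤ)):ℝ) ^ (-(2*(lam+s)))) :=
                ENNReal.tsum_add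
            _ = 2 * ∑' m : ℤ, ENNReal.ofReal (jb (m:ℝ) ^ (-(2*(lam+s)))) := by
                have ea := (Equiv.subLeft n₁).tsum_eq
                    (fun m : ℤ => ENNReal.ofReal (jb (m:ℝ) ^ (-(2*(lam+s)))))
                have eb := (Equiv.addLeft n₁).tsum_eq
                    (fun m : ℤ => ENNReal.ofReal (jb (m:ℝ) ^ (-(2*(lam+s)))))
                simp only [Equiv.subLeft_apply] at ea
                simp only [Equiv.coe_addLeft] at eb
                rw [ea, eb]
                exact (two_mul _).symm
        exact mul_le_mul' (ENNReal.rpow_le_rpow h1 (by norm_num))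
          (ENNReal.rpow_le_rpow h2 (by norm_num))

lemma col_bound (lam s : ℝ) (hlam : 0 ≤ lam) (hs : 0 < s)
    (Γ : ℤ → ℝ) (hΓ : ∀ n, 0 ≤ Γ n) (n₂ : ℤ) :
    ∑' n₁ : ℤ, ENNReal.ofReal (Γ (n₁ - n₂) / jb (|(n₁:ℝ)| - |(n₂:ℝ)|) ^ s)
      ≤ (∑' n : ℤ, ENNReal.ofReal (jb (n:ℝ) ^ (2*lam) * Γ n ^ 2)) ^ ((1:ℝ)/2)
        * (2 * ∑' m : ℤ, ENNReal.ofReal (jb (m:ℝ) ^ (-(2*(lam+s))))) ^ ((1:ℝ)/2) := by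
  set u : ℤ → ℝ := fun m => jb (m:ℝ) ^ lam * Γ m with hu_def
  set v : ℤ → ℝ := fun n₁ => jb ((n₁:ℝ) - (n₂:ℝ)) ^ (-lam) * jb (|(n₁:ℝ)| - |(n₂:ℝ)|) ^ (-s)
    with hv_def
  have hu : ∀ m, 0 ≤ u m := fun m => mul_nonneg (Real.rpow_nonneg (jb_pos _).le _) (hΓ m)
  have hker : ∀ n₁ : ℤ, Γ (n₁ - n₂) / jb (|(n₁:ℝ)| - |(n₂:ℝ)|) ^ s = u (n₁ - n₂) * v n₁ := by
    intro n₁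
    simp only [hu_def, hv_def]
    have hcast : ((n₁ - n₂ : ℤ) : ℝ) = (n₁:ℝ) - (n₂:ℝ) := by push_cast; ring
    rw [hcast, Real.rpow_neg (jb_pos _).le, Real.rpow_neg (jb_pos _).le]
    have hP : jb ((n₁:ℝ) - (n₂:ℝ)) ^ lam ≠ 0 := (Real.rpow_pos_of_pos (jb_pos _) _).ne'
    field_simp
  calc ∑' n₁ : ℤ, ENNReal.ofReal (Γ (n₁ - n₂) / jb (|(n₁:ℝ)| - |(n₂:ℝ)|) ^ s)
      = ∑' n₁ : ℤ, ENNReal.ofReal (u (n₁ - n₂)) * ENNReal.ofReal (v n₁) := by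
        congr 1; funext n₁; rw [hker n₁, ENNReal.ofReal_mul (hu _)]
    _ ≤ (∑' n₁ : ℤ, ENNReal.ofReal (u (n₁ - n₂)) ^ (2:ℝ)) ^ ((1:ℝ)/2)
        * (∑' n₁ : ℤ, ENNReal.ofReal (v n₁) ^ (2:ℝ)) ^ ((1:ℝ)/2) := tsum_cs _ _
    _ ≤ _ := by
        have h1 : ∑' n₁ : ℤ, ENNReal.ofReal (u (n₁ - n₂)) ^ (2:ℝ)
            ≤ ∑' n : ℤ, ENNReal.ofReal (jb (n:ℝ) ^ (2*lam) * Γ n ^ 2) := by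
          have eu := (Equiv.subRight n₂).tsum_eq (fun m : ℤ => ENNReal.ofReal (u m) ^ (2:ℝ))
          simp only [Equiv.subRight_apply] at eu
          rw [eu]
          exact le_of_eq (tsum_congr fun m => usq lam Γ hΓ m)
        have h2 : ∑' n₁ : ℤ, ENNReal.ofReal (v n₁) ^ (2:ℝ)
            ≤ 2 * ∑' m : ℤ, ENNReal.ofReal (jb (m:ℝ) ^ (-(2*(lam+s)))) := by
          calc ∑' n₁ : ℤ, ENNReal.ofReal (v n₁) ^ (2:ℝ)
              ≤ ∑' n₁ : ℤ, (ENNReal.ofReal (jb (((n₁ - n₂ : ℤ)):ℝ) ^ (-(2*(lam+s))))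
                + ENNReal.ofReal (jb (((n₁ + n₂ : ℤ)):ℝ) ^ (-(2*(lam+s))))) := by
                apply ENNReal.tsum_le_tsum
                intro n₁
                have := vsq lam s hlam hs (n₁:ℝ) (n₂:ℝ)
                simp only [hv_def]
                convert this using 4 <;> push_cast <;> ring
            _ = (∑' n₁ : ℤ, ENNReal.ofReal (jb (((n₁ - n₂ : ℤ)):ℝ) ^ (-(2*(lam+s)))))
                + ∑' n₁ : ℤ, ENNReal.ofReal (jb (((n₁ + n₂ : ℤ)):ℝ) ^ (-(2*(lam+s)))) :=
                ENNReal.tsum_add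
            _ = 2 * ∑' m : ℤ, ENNReal.ofReal (jb (m:ℝ) ^ (-(2*(lam+s)))) := by
                have ea := (Equiv.subRight n₂).tsum_eq
                    (fun m : ℤ => ENNReal.ofReal (jb (m:ℝ) ^ (-(2*(lam+s)))))
                have eb := (Equiv.addRight n₂).tsum_eq
                    (fun m : ℤ => ENNReal.ofReal (jb (m:ℝ) ^ (-(2*(lam+s)))))
                simp only [Equiv.subRight_apply] at ea
                simp only [Equiv.coe_addRight] at eb
                rw [ea, eb]
                exact (two_mul _).symm
        exact mul_le_mul' (ENNReal.rpow_le_rpow h1 (by norm_num))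
          (ENNReal.rpow_le_rpow h2 (by norm_num))

/-- Bilinear Schur-type kernel bound: for `s > 0`, `λ ≥ 0` with `λ + s > 1/2`,
`Σ_{|n₁| ≠ |n₂|} (Γ_{n₁−n₂}/⟨|n₁|−|n₂|⟩^s) ã_{n₁} b̃_{n₂}
  ≤ C (Σ ⟨n⟩^{2λ} Γ_n²)^{1/2} (Σ ã_n²)^{1/2} (Σ b̃_n²)^{1/2}`. -/
theorem bilinear_schur_kernel_bound (s lam : ℝ) (hs : 0 < s) (hlam : 0 ≤ lam)
    (hls : 1 / 2 < lam + s) :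
    ∃ C : ℝ, 0 < C ∧
      ∀ Γ : ℤ → ℝ, (∀ n, 0 ≤ Γ n) →
      ∀ ta tb : ℤ → ℝ, (∀ n, 0 ≤ ta n) → (∀ n, 0 ≤ tb n) →
        Summable (fun n => ta n ^ 2) → Summable (fun n => tb n ^ 2) →
        ∑' p : ℤ × ℤ,
            (if |p.1| ≠ |p.2| then
              ENNReal.ofReal
                (Γ (p.1 - p.2) / jb (|(p.1 : ℝ)| - |(p.2 : ℝ)|) ^ s
                  * ta p.1 * tb p.2)
            else 0)
          ≤ ENNReal.ofReal C *
            (∑' n : ℤ, ENNReal.ofReal (jb (n : ℝ) ^ (2 * lam) * Γ n ^ 2))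
              ^ ((1:ℝ)/2)
            * ENNReal.ofReal (∑' n : ℤ, ta n ^ 2) ^ ((1:ℝ)/2)
            * ENNReal.ofReal (∑' n : ℤ, tb n ^ 2) ^ ((1:ℝ)/2) := by
  have hr : (1:ℝ) < 2*(lam+s) := by linarith
  have hsum := summable_jb_rpow hr
  set S₀ : ℝ := ∑' m : ℤ, jb (m:ℝ) ^ (-(2*(lam+s))) with hS₀def
  have hS₀pos : 0 < S₀ := by
    have h0 : jb ((0:ℤ):ℝ) ^ (-(2*(lam+s))) = 1 := by
      have : jb ((0:ℤ):ℝ) = 1 := by simp [jb]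
      rw [this, Real.one_rpow]
    have hle := Summable.le_tsum hsum 0 (fun j _ => Real.rpow_nonneg (jb_pos _).le _)
    rw [h0] at hle
    linarith
  refine ⟨(2*S₀) ^ ((1:ℝ)/2), Real.rpow_pos_of_pos (by linarith) _, ?_⟩
  intro Γ hΓ ta tb hta htb hsa hsb
  set G : ℝ≥0∞ := ∑' n : ℤ, ENNReal.ofReal (jb (n:ℝ) ^ (2*lam) * Γ n ^ 2) with hGdef
  set S₀E : ℝ≥0∞ := ∑' m : ℤ, ENNReal.ofReal (jb (m:ℝ) ^ (-(2*(lam+s)))) with hSEdef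
  set X : ℝ≥0∞ := G ^ ((1:ℝ)/2) * (2 * S₀E) ^ ((1:ℝ)/2) with hXdef
  set W : ℤ × ℤ → ℝ≥0∞ :=
    fun p => ENNReal.ofReal (Γ (p.1 - p.2) / jb (|(p.1:ℝ)| - |(p.2:ℝ)|) ^ s) with hWdef
  set A : ℤ → ℝ≥0∞ := fun n => ENNReal.ofReal (ta n) with hAdef
  set B : ℤ → ℝ≥0∞ := fun n => ENNReal.ofReal (tb n) with hBdef
  -- Step 0
  have step0 : ∑' p : ℤ × ℤ,
      (if |p.1| ≠ |p.2| then
        ENNReal.ofReal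
          (Γ (p.1 - p.2) / jb (|(p.1 : ℝ)| - |(p.2 : ℝ)|) ^ s * ta p.1 * tb p.2)
      else 0) ≤ ∑' p : ℤ × ℤ, W p * A p.1 * B p.2 := by
    apply ENNReal.tsum_le_tsum
    intro p
    by_cases h : |p.1| ≠ |p.2|
    · rw [if_pos h]
      apply le_of_eq
      rw [hWdef, hAdef, hBdef]
      have hnn : 0 ≤ Γ (p.1 - p.2) / jb (|(p.1:ℝ)| - |(p.2:ℝ)|) ^ s :=
        div_nonneg (hΓ _) (Real.rpow_nonneg (jb_pos _).le _)
      rw [ENNReal.ofReal_mul (mul_nonneg hnn (hta _)), ENNReal.ofReal_mul hnn]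
    · rw [if_neg h]; exact zero_le
  -- Step 1 : Cauchy-Schwarz over pairs
  have hWW : ∀ p : ℤ × ℤ, W p ^ ((1:ℝ)/2) * W p ^ ((1:ℝ)/2) = W p := by
    intro p
    rw [← ENNReal.rpow_add_of_nonneg _ _ (by norm_num) (by norm_num)]
    norm_num
  have step1 : ∑' p : ℤ × ℤ, W p * A p.1 * B p.2
      ≤ (∑' p : ℤ × ℤ, (W p ^ ((1:ℝ)/2) * A p.1) ^ (2:ℝ)) ^ ((1:ℝ)/2)
        * (∑' p : ℤ × ℤ, (W p ^ ((1:ℝ)/2) * B p.2) ^ (2:ℝ)) ^ ((1:ℝ)/2) := by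
    have : ∀ p : ℤ × ℤ, W p * A p.1 * B p.2
        = (W p ^ ((1:ℝ)/2) * A p.1) * (W p ^ ((1:ℝ)/2) * B p.2) := by
      intro p
      rw [mul_mul_mul_comm, hWW p, mul_assoc]
    rw [tsum_congr this]
    exact tsum_cs _ _
  -- squares simplify
  have hsqA : ∀ p : ℤ × ℤ, (W p ^ ((1:ℝ)/2) * A p.1) ^ (2:ℝ) = W p * A p.1 ^ (2:ℝ) := by
    intro p
    rw [ENNReal.mul_rpow_of_nonneg _ _ (by norm_num), ← ENNReal.rpow_mul]
    norm_num
  have hsqB : ∀ p : ℤ × ℤ, (W p ^ ((1:ℝ)/2) * B p.2) ^ (2:ℝ) = W p * B p.2 ^ (2:ℝ) := by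
    intro p
    rw [ENNReal.mul_rpow_of_nonneg _ _ (by norm_num), ← ENNReal.rpow_mul]
    norm_num
  -- Step 2 : row sums
  have stepA : ∑' p : ℤ × ℤ, W p * A p.1 ^ (2:ℝ) ≤ X * ∑' n : ℤ, A n ^ (2:ℝ) := by
    rw [ENNReal.tsum_prod']
    calc ∑' n₁ : ℤ, ∑' n₂ : ℤ, W (n₁, n₂) * A n₁ ^ (2:ℝ)
        = ∑' n₁ : ℤ, A n₁ ^ (2:ℝ) * ∑' n₂ : ℤ, W (n₁, n₂) := by
          apply tsum_congr; intro n₁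
          rw [← ENNReal.tsum_mul_left]
          exact tsum_congr fun n₂ => mul_comm _ _
      _ ≤ ∑' n₁ : ℤ, A n₁ ^ (2:ℝ) * X := by
          apply ENNReal.tsum_le_tsum; intro n₁
          exact mul_le_mul_right (row_bound lam s hlam hs Γ hΓ n₁) _
      _ = X * ∑' n : ℤ, A n ^ (2:ℝ) := by
          rw [← ENNReal.tsum_mul_left]
          exact tsum_congr fun n => mul_comm _ _
  have stepB : ∑' p : ℤ × ℤ, W p * B p.2 ^ (2:ℝ) ≤ X * ∑' n : ℤ, B n ^ (2:ℝ) := by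
    rw [ENNReal.tsum_prod', ENNReal.tsum_comm]
    calc ∑' n₂ : ℤ, ∑' n₁ : ℤ, W (n₁, n₂) * B n₂ ^ (2:ℝ)
        = ∑' n₂ : ℤ, B n₂ ^ (2:ℝ) * ∑' n₁ : ℤ, W (n₁, n₂) := by
          apply tsum_congr; intro n₂
          rw [← ENNReal.tsum_mul_left]
          exact tsum_congr fun n₁ => mul_comm _ _
      _ ≤ ∑' n₂ : ℤ, B n₂ ^ (2:ℝ) * X := by
          apply ENNReal.tsum_le_tsum; intro n₂
          exact mul_le_mul_right (col_bound lam s hlam hs Γ hΓ n₂) _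
      _ = X * ∑' n : ℤ, B n ^ (2:ℝ) := by
          rw [← ENNReal.tsum_mul_left]
          exact tsum_congr fun n => mul_comm _ _
  -- identify sums of squares
  have hSA : ∑' n : ℤ, A n ^ (2:ℝ) = ENNReal.ofReal (∑' n : ℤ, ta n ^ 2) := by
    rw [ENNReal.ofReal_tsum_of_nonneg (fun n => sq_nonneg _) hsa]
    apply tsum_congr; intro n
    rw [hAdef, ENNReal.ofReal_rpow_of_nonneg (hta n) (by norm_num)]
    congr 1
    rw [show (2:ℝ) = ((2:ℕ):ℝ) by norm_num, Real.rpow_natCast]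
  have hSB : ∑' n : ℤ, B n ^ (2:ℝ) = ENNReal.ofReal (∑' n : ℤ, tb n ^ 2) := by
    rw [ENNReal.ofReal_tsum_of_nonneg (fun n => sq_nonneg _) hsb]
    apply tsum_congr; intro n
    rw [hBdef, ENNReal.ofReal_rpow_of_nonneg (htb n) (by norm_num)]
    congr 1
    rw [show (2:ℝ) = ((2:ℕ):ℝ) by norm_num, Real.rpow_natCast]
  -- the constant
  have hXval : (2 * S₀E) ^ ((1:ℝ)/2) = ENNReal.ofReal ((2*S₀) ^ ((1:ℝ)/2)) := by
    have hSE : S₀E = ENNReal.ofReal S₀ := by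
      rw [hS₀def, ENNReal.ofReal_tsum_of_nonneg
        (fun m => Real.rpow_nonneg (jb_pos _).le _) hsum]
    rw [hSE, ← ENNReal.ofReal_ofNat 2, ← ENNReal.ofReal_mul (by norm_num),
      ENNReal.ofReal_rpow_of_nonneg (mul_nonneg (by norm_num) hS₀pos.le) (by norm_num)]
  -- put everything together
  calc ∑' p : ℤ × ℤ,
      (if |p.1| ≠ |p.2| then
        ENNReal.ofReal
          (Γ (p.1 - p.2) / jb (|(p.1 : ℝ)| - |(p.2 : ℝ)|) ^ s * ta p.1 * tb p.2)
      else 0)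
      ≤ (∑' p : ℤ × ℤ, (W p ^ ((1:ℝ)/2) * A p.1) ^ (2:ℝ)) ^ ((1:ℝ)/2)
        * (∑' p : ℤ × ℤ, (W p ^ ((1:ℝ)/2) * B p.2) ^ (2:ℝ)) ^ ((1:ℝ)/2) :=
        step0.trans step1
    _ ≤ (X * ∑' n : ℤ, A n ^ (2:ℝ)) ^ ((1:ℝ)/2)
        * (X * ∑' n : ℤ, B n ^ (2:ℝ)) ^ ((1:ℝ)/2) := by
        apply mul_le_mul'
        · apply ENNReal.rpow_le_rpow _ (by norm_num)
          rw [tsum_congr hsqA]; exact stepA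
        · apply ENNReal.rpow_le_rpow _ (by norm_num)
          rw [tsum_congr hsqB]; exact stepB
    _ = X * ((∑' n : ℤ, A n ^ (2:ℝ)) ^ ((1:ℝ)/2) * (∑' n : ℤ, B n ^ (2:ℝ)) ^ ((1:ℝ)/2)) := by
        have habc : ∀ x a b : ℝ≥0∞, (x*a) ^ ((1:ℝ)/2) * (x*b) ^ ((1:ℝ)/2)
            = x * (a ^ ((1:ℝ)/2) * b ^ ((1:ℝ)/2)) := by
          intro x a b
          rw [ENNReal.mul_rpow_of_nonneg _ _ (by norm_num),
            ENNReal.mul_rpow_of_nonneg _ _ (by norm_num),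
            show x ^ ((1:ℝ)/2) * a ^ ((1:ℝ)/2) * (x ^ ((1:ℝ)/2) * b ^ ((1:ℝ)/2))
              = (x ^ ((1:ℝ)/2) * x ^ ((1:ℝ)/2)) * (a ^ ((1:ℝ)/2) * b ^ ((1:ℝ)/2)) from by ring,
            ← ENNReal.rpow_add_of_nonneg _ _ (by norm_num) (by norm_num)]
          norm_num
        exact habc X _ _
    _ ≤ _ := by
        rw [hSA, hSB, hXdef, hXval]
        apply le_of_eq
        ring
end
end

section
/- Let α > 1 and σ > 0 be real numbers, let (a_n)_{n∈ℤ} be a square-summable family of complex numbers, let ψ : ℝ → ℂ be a Schwartz function with Fourier transform ψ̂(τ) = ∫_ℝ ψ(t) e^{itτ} dt, and let k ∈ ℤ with k ≠ 0. Then the sequence c_N = Σ_{m ∈ ℤ, |m| ≤ N, |k+m| ≤ N} ⟨k+m⟩^σ ⟨m⟩^σ a_{k+m} · conj(a_m) · ψ̂( |k+m|^α − |m|^α ), indexed by N ∈ ℕ, converges in ℂ as N → ∞. -/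
open Real MeasureTheory Filter Finset

noncomputable section

open scoped RealInnerProductSpace

lemma gap_lower {α : ℝ} (hα : 1 < α) {u v : ℝ} (hu : 0 < u) (huv : u ≤ v) :
    u ^ (α - 1) * (v - u) ≤ v ^ α - u ^ α := by
  have hv : 0 < v := lt_of_lt_of_le hu huv
  have h1 : v ^ ((α - 1) + 1) = v ^ (α-1) * v := Real.rpow_add_one hv.ne' (α - 1)
  have h2 : u ^ ((α - 1) + 1) = u ^ (α-1) * u := Real.rpow_add_one hu.ne' (α - 1)
  rw [sub_add_cancel] at h1 h2
  have h3 : u ^ (α - 1) ≤ v ^ (α - 1) := Real.rpow_le_rpow hu.le huv (by linarith)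
  nlinarith [Real.rpow_nonneg hu.le (α - 1)]

lemma jb_abs (x : ℝ) : jb |x| = jb x := by rw [jb, jb, sq_abs]

lemma jb_nonneg (x : ℝ) : 0 ≤ jb x := Real.rpow_nonneg (by positivity) _

lemma jb_le {x : ℝ} (hx : 1 ≤ x) : jb x ≤ 2 * x := by
  rw [jb, ← Real.sqrt_eq_rpow]
  have h : (2:ℝ) * x = Real.sqrt ((2*x)^2) := (Real.sqrt_sq (by linarith)).symm
  rw [h]
  apply Real.sqrt_le_sqrt
  nlinarith

lemma key_int (ψ : SchwartzMap ℝ ℂ) (τ : ℝ) :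
    (∫ t : ℝ, ψ t * Complex.exp (Complex.I * t * (τ:ℂ))) = FourierTransform.fourier (ψ : ℝ → ℂ) (-τ / (2*π)) := by
  rw [Real.fourier_eq']
  congr 1
  funext t
  rw [smul_eq_mul, mul_comm]
  congr 1
  have hπ : (π:ℝ) ≠ 0 := Real.pi_ne_zero
  have h : ⟪t, -τ / (2*π)⟫ = t * (-τ / (2*π)) := by rw [RCLike.inner_apply', conj_trivial]
  rw [h]
  have h2 : (-2 * π * (t * (-τ / (2 * π))) : ℝ) = t * τ := by field_simp
  rw [h2]
  push_cast
  ring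

lemma int_abs_diff {k m : ℤ} (hm : |k| < |m|) : |(|k + m| - |m|)| = |k| := by
  have h1 : -|k| ≤ k := neg_abs_le k
  have h2 : k ≤ |k| := le_abs_self k
  rcases le_or_gt 0 m with h | h
  · have e1 : |m| = m := abs_of_nonneg h
    have e2 : |k + m| = k + m := abs_of_nonneg (by rw [e1] at hm; linarith)
    rw [e1, e2, add_sub_cancel_right]
  · have e1 : |m| = -m := abs_of_nonpos h.le
    have e2 : |k + m| = -(k + m) := abs_of_nonpos (by rw [e1] at hm; linarith)
    rw [e1, e2]
    rw [show -(k+m) - -m = -k by ring, abs_neg]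

set_option maxHeartbeats 1600000 in
/-- Convergence of the `k`-th spatial Fourier mode (tested in time against a
Schwartz function `ψ`) of the renormalized square
`|⟨D_x⟩^σ e^{it|D_x|^α} Π_N u₀|² − ‖Π_N u₀‖²_{H^σ}`, for `k ≠ 0`. -/
theorem renormalized_mode_converges
    (α σ : ℝ) (hα : 1 < α) (hσ : 0 < σ)
    (a : ℤ → ℂ) (ha : Summable (fun n => ‖a n‖ ^ 2))
    (ψ : SchwartzMap ℝ ℂ) (k : ℤ) (hk : k ≠ 0) :
    ∃ L : ℂ, Tendsto
      (fun N : ℕ =>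
        ∑ m ∈ (Finset.Icc (-(N : ℤ)) (N : ℤ)).filter
            (fun m => |k + m| ≤ (N : ℤ)),
          ((jb ((k + m : ℤ) : ℝ) ^ σ * jb ((m : ℤ) : ℝ) ^ σ : ℝ) : ℂ)
            * a (k + m) * (starRingEnd ℂ) (a m)
            * (∫ t : ℝ, ψ t * Complex.exp
                (Complex.I * t
                  * ((|((k + m : ℤ) : ℝ)| ^ α - |((m : ℤ) : ℝ)| ^ α : ℝ) : ℂ))))
      atTop (nhds L) := by
  classical
  set g : SchwartzMap ℝ ℂ := SchwartzMap.fourierTransformCLM ℂ ψ with hgdef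
  obtain ⟨n, hn⟩ : ∃ n : ℕ, 2 * σ ≤ (α - 1) * n := by
    refine ⟨⌈2 * σ / (α - 1)⌉₊, ?_⟩
    have h1 : 2 * σ / (α - 1) ≤ (⌈2 * σ / (α - 1)⌉₊ : ℝ) := Nat.le_ceil _
    have h2 : 0 < α - 1 := by linarith
    rw [div_le_iff₀ h2] at h1; linarith
  obtain ⟨C, hC0, hC⟩ := g.decay n 0
  set β : ℝ := (α - 1) * (n : ℝ) with hβ
  set D : ℝ := 4 ^ (2*σ) * (C * (2*π) ^ n * 2 ^ β) with hD
  have hsum : Summable (fun m : ℤ =>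
      ((jb ((k + m : ℤ) : ℝ) ^ σ * jb ((m : ℤ) : ℝ) ^ σ : ℝ) : ℂ)
        * a (k + m) * (starRingEnd ℂ) (a m)
        * (∫ t : ℝ, ψ t * Complex.exp
            (Complex.I * t
              * ((|((k + m : ℤ) : ℝ)| ^ α - |((m : ℤ) : ℝ)| ^ α : ℝ) : ℂ)))) := by
    apply Summable.of_norm_bounded_eventually
      (g := fun m => D * (‖a (k+m)‖^2 + ‖a m‖^2))
      (((ha.comp_injective (add_right_injective k)).add ha).mul_left D)
    rw [Filter.eventually_cofinite]
    have hfin : {m : ℤ | ¬ (2 * |k| + 2 ≤ |m|)}.Finite := by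
      apply (Set.finite_Icc (-(2 * |k| + 2)) (2 * |k| + 2)).subset
      intro m hm
      simp only [Set.mem_setOf_eq, not_le] at hm
      have h := abs_lt.mp hm
      exact Set.mem_Icc.2 ⟨by linarith [h.1], by linarith [h.2]⟩
    apply hfin.subset
    intro m hm
    simp only [Set.mem_setOf_eq] at hm ⊢
    intro hcon
    apply hm
    -- Notation
    set x : ℝ := |((k + m : ℤ) : ℝ)| with hxdef
    set y : ℝ := |((m : ℤ) : ℝ)| with hydef
    set τ : ℝ := x ^ α - y ^ α with hτdef
    -- basic real facts
    have hk1 : (1:ℤ) ≤ |k| := Int.one_le_abs hk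
    have hk1r : (1:ℝ) ≤ |(k:ℝ)| := by
      rw [← Int.cast_abs]; exact_mod_cast hk1
    have hyk : 2 * |(k:ℝ)| + 2 ≤ y := by
      rw [hydef, ← Int.cast_abs, ← Int.cast_abs]
      exact_mod_cast hcon
    have hxy : |x - y| = |(k:ℝ)| := by
      have h0 : |k| < |m| := by linarith
      have h := congrArg (fun z : ℤ => (z : ℝ)) (int_abs_diff h0)
      push_cast at h
      rw [hxdef, hydef]
      push_cast
      exact h
    have hy4 : (4:ℝ) ≤ y := by linarith
    have hxy1 : -(|(k:ℝ)|) ≤ x - y := by rw [← hxy]; exact neg_abs_le _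
    have hxy2 : x - y ≤ |(k:ℝ)| := by rw [← hxy]; exact le_abs_self _
    have hx2 : y / 2 ≤ x := by linarith
    have hx1 : (1:ℝ) ≤ x := by linarith
    have hy1 : (1:ℝ) ≤ y := by linarith
    have hx4y : x ≤ 2 * y := by linarith
    -- lower bound on |τ|
    have hτlb : (y/2) ^ (α - 1) ≤ |τ| := by
      have hα1 : (0:ℝ) ≤ α - 1 := by linarith
      rcases le_total x y with hxy' | hxy'
      · have hgap := gap_lower hα (show (0:ℝ) < x by linarith) hxy'
        have hvk : |(k:ℝ)| = y - x := by rw [← hxy, abs_sub_comm, abs_of_nonneg (by linarith)]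
        have h1 : (y/2) ^ (α-1) ≤ x ^ (α-1) := Real.rpow_le_rpow (by linarith) hx2 hα1
        have h2 : x ^ (α-1) * 1 ≤ x ^ (α-1) * (y - x) := by
          apply mul_le_mul_of_nonneg_left _ (Real.rpow_nonneg (by linarith) _)
          linarith
        have h3 : y ^ α - x ^ α ≤ |τ| := by
          rw [hτdef]
          calc y ^ α - x ^ α = -(x ^ α - y ^ α) := by ring
          _ ≤ |x ^ α - y ^ α| := neg_le_abs _
        linarith
      · have hgap := gap_lower hα (show (0:ℝ) < y by linarith) hxy'
        have hvk : |(k:ℝ)| = x - y := by rw [← hxy, abs_of_nonneg (by linarith)]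
        have h1 : (y/2) ^ (α-1) ≤ y ^ (α-1) := Real.rpow_le_rpow (by linarith) (by linarith) hα1
        have h2 : y ^ (α-1) * 1 ≤ y ^ (α-1) * (x - y) := by
          apply mul_le_mul_of_nonneg_left _ (Real.rpow_nonneg (by linarith) _)
          linarith
        have h3 : x ^ α - y ^ α ≤ |τ| := le_abs_self _
        linarith
    have hτpos : (0:ℝ) < |τ| := lt_of_lt_of_le (by positivity) hτlb
    -- the integral equals g evaluated at -τ/(2π)
    have hI : (∫ t : ℝ, ψ t * Complex.exp
            (Complex.I * t
              * ((|((k + m : ℤ) : ℝ)| ^ α - |((m : ℤ) : ℝ)| ^ α : ℝ) : ℂ)))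
        = g (-τ / (2*π)) := by
      rw [hgdef, SchwartzMap.fourierTransformCLM_apply]
      exact key_int ψ τ
    -- decay bound on the Fourier transform
    have hw : ‖(-τ / (2*π) : ℝ)‖ = |τ| / (2*π) := by
      rw [Real.norm_eq_abs, abs_div, abs_neg, abs_of_pos Real.two_pi_pos]
    have hgw : |τ| ^ n * ‖g (-τ / (2*π))‖ ≤ C * (2*π) ^ n := by
      have h := hC (-τ / (2*π))
      rw [norm_iteratedFDeriv_zero, hw, div_pow] at h
      have h2π : (0:ℝ) < (2*π) ^ n := by positivity
      calc |τ| ^ n * ‖g (-τ / (2*π))‖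
          = (|τ| ^ n / (2*π) ^ n * ‖g (-τ / (2*π))‖) * (2*π) ^ n := by field_simp
        _ ≤ C * (2*π) ^ n := mul_le_mul_of_nonneg_right h h2π.le
    have hτn : (y/2) ^ β ≤ |τ| ^ n := by
      have h1 : ((y/2) ^ (α-1)) ^ n ≤ |τ| ^ n :=
        pow_le_pow_left₀ (Real.rpow_nonneg (by linarith) _) hτlb n
      have h2 : ((y/2) ^ (α-1)) ^ n = (y/2) ^ β := by
        rw [← Real.rpow_natCast ((y/2) ^ (α-1)) n, ← Real.rpow_mul (by linarith)]
      rw [← h2]; exact h1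
    have hgw2 : ‖g (-τ / (2*π))‖ ≤ C * (2*π) ^ n / (y/2) ^ β := by
      rw [le_div_iff₀ (by positivity)]
      calc ‖g (-τ / (2*π))‖ * (y/2) ^ β ≤ ‖g (-τ / (2*π))‖ * |τ| ^ n := by
            apply mul_le_mul_of_nonneg_left hτn (norm_nonneg _)
        _ = |τ| ^ n * ‖g (-τ / (2*π))‖ := mul_comm _ _
        _ ≤ C * (2*π) ^ n := hgw
    -- weight bound
    have hW : jb x ^ σ * jb y ^ σ ≤ 4 ^ (2*σ) * y ^ (2*σ) := by
      have hjx : jb x ^ σ ≤ (4*y) ^ σ :=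
        Real.rpow_le_rpow (jb_nonneg x) (by have := jb_le hx1; linarith) hσ.le
      have hjy : jb y ^ σ ≤ (4*y) ^ σ :=
        Real.rpow_le_rpow (jb_nonneg y) (by have := jb_le hy1; linarith) hσ.le
      have h1 : jb x ^ σ * jb y ^ σ ≤ (4*y) ^ σ * (4*y) ^ σ :=
        mul_le_mul hjx hjy (Real.rpow_nonneg (jb_nonneg y) _) (Real.rpow_nonneg (by linarith) _)
      have h2 : (4*y) ^ σ * (4*y) ^ σ = 4 ^ (2*σ) * y ^ (2*σ) := by
        rw [← Real.rpow_add (by linarith), show σ + σ = 2*σ by ring,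
          Real.mul_rpow (by norm_num) (by linarith)]
      linarith [h1, h2.le]
    -- combine
    have hWg : jb x ^ σ * jb y ^ σ * ‖g (-τ / (2*π))‖ ≤ D := by
      calc jb x ^ σ * jb y ^ σ * ‖g (-τ / (2*π))‖
          ≤ (4 ^ (2*σ) * y ^ (2*σ)) * (C * (2*π) ^ n / (y/2) ^ β) := by
            apply mul_le_mul hW hgw2 (norm_nonneg _) (by positivity)
        _ = 4 ^ (2*σ) * (C * (2*π) ^ n * 2 ^ β) * y ^ (2*σ - β) := by
            rw [Real.div_rpow (by linarith) (by norm_num), Real.rpow_sub (by linarith)]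
            have hyβ : (0:ℝ) < y ^ β := Real.rpow_pos_of_pos (by linarith) _
            have h2β : (0:ℝ) < (2:ℝ) ^ β := Real.rpow_pos_of_pos (by norm_num) _
            field_simp
        _ ≤ D * 1 := by
            rw [hD]
            apply mul_le_mul_of_nonneg_left _ (by positivity)
            exact Real.rpow_le_one_of_one_le_of_nonpos hy1 (by rw [hβ]; linarith)
        _ = D := mul_one _
    -- final estimate
    rw [hI]
    rw [norm_mul, norm_mul, norm_mul, Complex.norm_real]
    have hconj : ‖(starRingEnd ℂ) (a m)‖ = ‖a m‖ := RCLike.norm_conj _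
    rw [hconj]
    have hWg' : jb ((k + m : ℤ) : ℝ) ^ σ * jb ((m : ℤ) : ℝ) ^ σ * ‖g (-τ / (2*π))‖ ≤ D := by
      rw [show jb ((k + m : ℤ) : ℝ) = jb x from (jb_abs _).symm,
          show jb ((m : ℤ) : ℝ) = jb y from (jb_abs _).symm]
      exact hWg
    have hWnn' : (0:ℝ) ≤ jb ((k + m : ℤ) : ℝ) ^ σ * jb ((m : ℤ) : ℝ) ^ σ :=
      mul_nonneg (Real.rpow_nonneg (jb_nonneg _) _) (Real.rpow_nonneg (jb_nonneg _) _)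
    rw [Real.norm_eq_abs, abs_of_nonneg hWnn']
    have hab : ‖a (k+m)‖ * ‖a m‖ ≤ ‖a (k+m)‖^2 + ‖a m‖^2 := by
      nlinarith [sq_nonneg (‖a (k+m)‖ - ‖a m‖), norm_nonneg (a (k+m)), norm_nonneg (a m)]
    have hDnn : (0:ℝ) ≤ D := by
      rw [hD]
      have h2π : (0:ℝ) ≤ (2*π) ^ n := by positivity
      exact mul_nonneg (Real.rpow_nonneg (by norm_num) _)
        (mul_nonneg (mul_nonneg hC0.le h2π) (Real.rpow_nonneg (by norm_num) _))
    calc jb ((k + m : ℤ) : ℝ) ^ σ * jb ((m : ℤ) : ℝ) ^ σ * ‖a (k+m)‖ * ‖a m‖ * ‖g (-τ / (2*π))‖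
        = (jb ((k + m : ℤ) : ℝ) ^ σ * jb ((m : ℤ) : ℝ) ^ σ * ‖g (-τ / (2*π))‖) * (‖a (k+m)‖ * ‖a m‖) := by ring
      _ ≤ D * (‖a (k+m)‖^2 + ‖a m‖^2) :=
          mul_le_mul hWg' hab (by positivity) hDnn
  -- exhaustion of ℤ by the given finsets
  have hF : Tendsto (fun N : ℕ => (Finset.Icc (-(N:ℤ)) (N:ℤ)).filter
      (fun m => |k + m| ≤ (N:ℤ))) atTop atTop := by
    apply tendsto_atTop_finset_of_monotone
    · intro N N' hNN' m hm
      simp only [Finset.mem_filter, Finset.mem_Icc] at hm ⊢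
      have h : (N:ℤ) ≤ (N':ℤ) := by exact_mod_cast hNN'
      exact ⟨⟨by linarith [hm.1.1], by linarith [hm.1.2]⟩, le_trans hm.2 h⟩
    · intro m
      refine ⟨m.natAbs + (k+m).natAbs, ?_⟩
      simp only [Finset.mem_filter, Finset.mem_Icc]
      have h1 : ((m.natAbs + (k+m).natAbs : ℕ) : ℤ) = |m| + |k+m| := by
        push_cast [Int.natCast_natAbs]
        ring
      rw [h1]
      refine ⟨⟨?_, ?_⟩, ?_⟩
      · have := neg_abs_le m; have := abs_nonneg (k+m); linarith
      · have := le_abs_self m; have := abs_nonneg (k+m); linarith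
      · have := abs_nonneg m; linarith
  exact ⟨_, hsum.hasSum.comp hF⟩

end
end
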